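/- Let a_i = 2^{−i} · ∏_{j=i+1}^{∞} (1 − 2^{−j}) for each natural number i ≥ 0, where the infinite product is the convergent product over all integers j ≥ i+1. Then ∑_{i=0}^{∞} a_i = 1. -/

import Mathlib

/-!
Write `x j = 2^{-j}` and `T n = ∏_{j ≥ n} (1 - x j)`, so that `a i = x i * T (i + 1)`.
Peeling off the first factor gives `x n * T (n + 1) = T (n + 1) - T n`, so the partial sums
telescope to `T n - T 0`. For any summable `x` the tails `T n` tend to `1` (their logarithms
are tails of a convergent series), hence `∑ i, x i * T (i + 1) = 1 - T 0`; here `x 0 = 1`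
makes `T 0 = 0`.
-/

open Filter Finset Topology

/-- `a i = 2^{−i} · ∏_{j=i+1}^{∞} (1 − 2^{−j})`, the infinite product taken over all
integers `j ≥ i + 1` (indexed by `j ↦ j + i + 1` over `ℕ`). -/
noncomputable def a (i : ℕ) : ℝ :=
  (2 : ℝ) ^ (-(i : ℤ)) * ∏' j : ℕ, (1 - (2 : ℝ) ^ (-((j : ℤ) + (i : ℤ) + 1)))

noncomputable def tailProd (x : ℕ → ℝ) (n : ℕ) : ℝ := ∏' j, (1 - x (j + n))

section TailProd

variable {x : ℕ → ℝ}

theorem multipliable_one_sub_of_summable (hx : Summable x) : Multipliable fun j => 1 - x j := by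
  simpa only [sub_eq_add_neg] using Real.multipliable_one_add_of_summable hx.neg

theorem tailProd_eq_one_sub_mul (hx : Summable x) (n : ℕ) :
    tailProd x n = (1 - x n) * tailProd x (n + 1) := by
  have hshift : Multipliable fun j => 1 - x (j + (n + 1)) :=
    multipliable_one_sub_of_summable ((summable_nat_add_iff (n + 1)).2 hx)
  rw [tailProd, tprod_eq_zero_mul' (f := fun j => 1 - x (j + n)), zero_add, tailProd]
  · simp only [add_right_comm _ 1 n, add_assoc]
  · simpa only [add_right_comm _ 1 n, add_assoc] using hshift

theorem sum_range_mul_tailProd_succ (hx : Summable x) (n : ℕ) :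
    ∑ i ∈ range n, x i * tailProd x (i + 1) = tailProd x n - tailProd x 0 := by
  induction n with
  | zero => simp
  | succ n ih => rw [sum_range_succ, ih, tailProd_eq_one_sub_mul hx n]; ring

theorem tendsto_tailProd (hx : Summable x) : Tendsto (tailProd x) atTop (𝓝 1) := by
  have hlog : Summable fun j => Real.log (1 - x j) := by
    simpa only [sub_eq_add_neg] using Real.summable_log_one_add_of_summable hx.neg
  obtain ⟨N, hN⟩ := eventually_atTop.1 (hx.tendsto_atTop_zero.eventually (gt_mem_nhds one_pos))
  have hexp : Tendsto (fun n => Real.exp (∑' j, Real.log (1 - x (j + n)))) atTop (𝓝 1) := by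
    simpa only [Function.comp_def, Real.exp_zero] using
      (Real.continuous_exp.tendsto 0).comp (tendsto_sum_nat_add fun j => Real.log (1 - x j))
  refine hexp.congr' (eventually_atTop.2 ⟨N, fun n hn => ?_⟩)
  exact Real.rexp_tsum_eq_tprod (fun j => sub_pos.2 (hN _ (by omega)))
    ((summable_nat_add_iff n).2 hlog)

theorem hasSum_mul_tailProd_succ (hx : Summable x) :
    HasSum (fun i => x i * tailProd x (i + 1)) (1 - tailProd x 0) := by
  have hT : Tendsto (fun i => tailProd x (i + 1)) atTop (𝓝 1) :=
    (tendsto_tailProd hx).comp (tendsto_add_atTop_nat 1)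
  have hsum : Summable fun i => x i * tailProd x (i + 1) :=
    hx.norm.mul_tendsto_const (Nat.cofinite_eq_atTop ▸ hT)
  refine hsum.hasSum_iff_tendsto_nat.2 ?_
  simpa only [sum_range_mul_tailProd_succ hx] using (tendsto_tailProd hx).sub_const (tailProd x 0)

end TailProd

theorem a_eq_mul_tailProd (i : ℕ) :
    a i = (2 : ℝ) ^ (-(i : ℤ)) * tailProd (fun j => (2 : ℝ) ^ (-(j : ℤ))) (i + 1) := by
  unfold a tailProd
  push_cast
  simp only [add_assoc]

theorem summable_two_zpow_neg : Summable fun j : ℕ => (2 : ℝ) ^ (-(j : ℤ)) := by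
  simpa only [zpow_neg, zpow_natCast, one_div, inv_pow] using summable_geometric_two

/-- `∑_{i=0}^{∞} a_i = 1`. -/
theorem tsum_a_eq_one : ∑' i : ℕ, a i = 1 := by
  have hx := summable_two_zpow_neg
  have hT0 : tailProd (fun j => (2 : ℝ) ^ (-(j : ℤ))) 0 = 0 := by
    rw [tailProd_eq_one_sub_mul hx]; simp
  simpa only [← a_eq_mul_tailProd, hT0, sub_zero] using (hasSum_mul_tailProd_succ hx).tsum_eq
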